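/- arXiv:2508.03150 — 3 statements merged into one kernel-verified Lean document; each statement's English description precedes it below -/
import Mathlib

section
/- Weyl-type formula: Let R be a commutative ring, N a positive integer, and suppose an N×N matrix X over R factors as X = L·D·U with L lower unitriangular, D diagonal, and U upper unitriangular. Let r be an integer with 0 ≤ r ≤ N and λ a partition with ℓ(λ) ≤ r and λ_1 ≤ N−r. Then det of the r×r submatrix of X with rows {1,…,r} and columns J(λ;r) equals (∏_{i=1}^{r} D_{ii}) · S^{(r)}_{λ}(U). (Equivalently, when ∏_{i≤r} D_{ii} is invertible, S^{(r)}_{λ}(U) = ξ^{1,…,r}_{J(λ;r)}(X) / ξ^{1,…,r}_{1,…,r}(X), where ξ^I_J(X) denotes the minor of X on rows I and columns J.) -/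
open Matrix BigOperators Finset Filter

/-- Extend a `Fin N`-indexed matrix to `ℕ` indices by zero. -/
def matExt {R : Type*} [Zero R] {N : ℕ} (U : Matrix (Fin N) (Fin N) R) : ℕ → ℕ → R :=
  fun i j => if hi : i < N then (if hj : j < N then U ⟨i, hi⟩ ⟨j, hj⟩ else 0) else 0

/-- `U` is upper unitriangular. -/
def UpperUni {R : Type*} [Zero R] [One R] {N : ℕ} (U : Matrix (Fin N) (Fin N) R) : Prop :=
  (∀ i, U i i = 1) ∧ ∀ i j : Fin N, (j : ℕ) < (i : ℕ) → U i j = 0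

/-- `L` is lower unitriangular. -/
def LowerUni {R : Type*} [Zero R] [One R] {N : ℕ} (L : Matrix (Fin N) (Fin N) R) : Prop :=
  (∀ i, L i i = 1) ∧ ∀ i j : Fin N, (i : ℕ) < (j : ℕ) → L i j = 0

/-- 0-based entries of the Maya diagram `J(λ;r)` (the `a`-th smallest element, minus 1):
for `a = 0,…,r-1` this is `λ_{r-a} + a` (with `λ` 0-based). -/
def maya (lam : ℕ → ℕ) (r : ℕ) (a : Fin r) : ℕ := lam (r - 1 - (a : ℕ)) + (a : ℕ)

/-- The ninth variation of the skew Schur function `S^{(r)}_{λ/μ}(U)`: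
the minor of `U` on rows `J(μ;r)` and columns `J(λ;r)`. -/
def SchurV {R : Type*} [CommRing R] {N : ℕ} (U : Matrix (Fin N) (Fin N) R)
    (r : ℕ) (lam mu : ℕ → ℕ) : R :=
  Matrix.det (Matrix.of fun i j : Fin r => matExt U (maya mu r i) (maya lam r j))

/-- Conjugate partition (0-based), counting parts among indices `< B`. -/
def conjF (f : ℕ → ℕ) (B : ℕ) : ℕ → ℕ :=
  fun i => ((Finset.range B).filter fun j => i + 1 ≤ f j).card

/-- The hook partition `(a+1, 1^b)` (0-based function). -/
def hookP (a b : ℕ) : ℕ → ℕ := fun k => if k = 0 then a + 1 else if k ≤ b then 1 else 0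

/-- `h^{(r)}_d(U) = S^{(r)}_{(d)}(U)`, zero for `d < 0`. -/
def hSV {R : Type*} [CommRing R] {N : ℕ} (U : Matrix (Fin N) (Fin N) R) (r : ℕ) (d : ℤ) : R :=
  if 0 ≤ d then SchurV U r (fun k => if k = 0 then d.toNat else 0) (fun _ => 0) else 0

/-- `e^{(r)}_d(U) = S^{(r)}_{(1^d)}(U)`, zero for `d < 0`. -/
def eSV {R : Type*} [CommRing R] {N : ℕ} (U : Matrix (Fin N) (Fin N) R) (r : ℕ) (d : ℤ) : R :=
  if 0 ≤ d then SchurV U r (fun k => if k < d.toNat then 1 else 0) (fun _ => 0) else 0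

/-- The partition with Frobenius coordinates `(a|b)` (all 0-based as functions). -/
def frobP (p : ℕ) (a b : Fin p → ℕ) : ℕ → ℕ :=
  fun i => if h : i < p then a ⟨i, h⟩ + i + 1
    else (Finset.univ.filter fun j : Fin p => i < b j + (j : ℕ) + 1).card

/-- `f : ℕ → ℤ` is a partition of length `≤ B`. -/
def IsPartZ (B : ℕ) (f : ℕ → ℤ) : Prop :=
  (∀ i, f (i + 1) ≤ f i) ∧ (∀ i, 0 ≤ f i) ∧ (∀ i, B ≤ i → f i = 0)

/-- `lam/mu` is a skew partition (of length `≤ B`). -/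
def IsSkewZ (B : ℕ) (lam mu : ℕ → ℤ) : Prop :=
  IsPartZ B lam ∧ IsPartZ B mu ∧ ∀ i, mu i ≤ lam i

open Classical in
/-- `S^{(r)}_{λ/μ}(U)` with the convention that it is `0` if `λ/μ` is not a skew partition. -/
noncomputable def SchurVz {R : Type*} [CommRing R] {N : ℕ} (U : Matrix (Fin N) (Fin N) R)
    (r B : ℕ) (lam mu : ℕ → ℤ) : R :=
  if IsSkewZ B lam mu then SchurV U r (fun i => (lam i).toNat) (fun i => (mu i).toNat) else 0

open Classical in
/-- `S^{(r)}_{λ'/μ'}(U)` applied to the conjugates, with the zero convention. -/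
noncomputable def SchurVzConj {R : Type*} [CommRing R] {N : ℕ} (U : Matrix (Fin N) (Fin N) R)
    (r B : ℕ) (lam mu : ℕ → ℤ) : R :=
  if IsSkewZ B lam mu then
    SchurV U r (conjF (fun i => (lam i).toNat) B) (conjF (fun i => (mu i).toNat) B) else 0

/-- `lam/mu` is a skew partition (ℕ-valued version). -/
def IsSkewN (B : ℕ) (lam mu : ℕ → ℕ) : Prop :=
  (∀ i, lam (i + 1) ≤ lam i) ∧ (∀ i, mu (i + 1) ≤ mu i) ∧ (∀ i, mu i ≤ lam i) ∧
    (∀ i, B ≤ i → lam i = 0)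

open Classical in
noncomputable def SchurVn {R : Type*} [CommRing R] {N : ℕ} (U : Matrix (Fin N) (Fin N) R)
    (r B : ℕ) (lam mu : ℕ → ℕ) : R :=
  if IsSkewN B lam mu then SchurV U r lam mu else 0

/-- The rectangular partition `[m|n] = (n^m)`. -/
def rectP (m n : ℕ) : ℕ → ℕ := fun i => if i < m then n else 0

/-- `[m|n]^l = ((n+1)^l, n^{m-l})`. -/
def rectUpP (m n l : ℕ) : ℕ → ℕ := fun i => if i < l then n + 1 else if i < m then n else 0

/-- `[m|n]_k = (n^m, k)`. -/
def rectLowP (m n k : ℕ) : ℕ → ℕ := fun i => if i < m then n else if i = m then k else 0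

/-- `E + c·E_{t,t+1}` (indices 0-based). -/
def elemMat {R : Type*} [CommRing R] (N t : ℕ) (c : R) : Matrix (Fin N) (Fin N) R :=
  1 + Matrix.of (fun i j : Fin N => if (i : ℕ) = t ∧ (j : ℕ) = t + 1 then c else 0)

/-- `U = U_1 ⋯ U_M` with `U_k = (E + w_{k,1-r}E_{1,2}) ⋯ (E + w_{k,N-1-r}E_{N-1,N})`. -/
def UmatW {R : Type*} [CommRing R] (N M : ℕ) (r : ℤ) (w : ℕ → ℤ → R) :
    Matrix (Fin N) (Fin N) R :=
  ((List.range M).map fun k =>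
    ((List.range (N - 1)).map fun t => elemMat N t (w (k + 1) ((t : ℤ) + 1 - r))).prod).prod

/-- The partition `(m_1^{r_1} m_2^{r_2-r_1} ⋯ m_n^{r_n-r_{n-1}})` (corner data 0-based). -/
def stepPart (n : ℕ) (m rr : ℕ → ℕ) : ℕ → ℕ :=
  fun i =>
    if h : (((Finset.range n).filter fun j => i < rr j)).Nonempty then
      m (((Finset.range n).filter fun j => i < rr j).min' h)
    else 0

/-- `Add_{a,b}` (rows 1-based in `a`, `b`; the function argument is 0-based). -/
def AddOp (a b : ℕ) (k : ℕ → ℕ) : ℕ → ℕ := fun i =>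
  if i + 1 ≤ a then k i
  else if i + 1 = a + 1 then k (a - 1)
  else if i + 1 ≤ b + 1 then k (i - 1) + 1
  else k i

/-- `Rem_{a,b}`. -/
def RemOp (a b : ℕ) (k : ℕ → ℕ) : ℕ → ℕ := fun i =>
  if i + 1 < a then k i
  else if i + 1 ≤ b - 1 then k (i + 1) - 1
  else if i + 1 = b then k b
  else k i

/-- `op_{a 0, b 0} ∘ op_{a 1, b 1} ∘ ⋯ ∘ op_{a (t-1), b (t-1)}` applied to `k`. -/
def iterOp (op : ℕ → ℕ → (ℕ → ℕ) → ℕ → ℕ) (t : ℕ) (a b : ℕ → ℕ) (k : ℕ → ℕ) : ℕ → ℕ :=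
  (List.range t).foldr (fun i acc => op (a i) (b i) acc) k

/-- the `i`-th smallest element of a finite set of naturals (0-based). -/
def ascNth (s : Finset ℕ) (i : ℕ) : ℕ := (s.sort (· ≤ ·)).getD i 0

/-- The cells of the skew Young diagram `D(λ/μ)` (0-based, rows `< B`). -/
def cellsD (B : ℕ) (lam mu : ℕ → ℕ) : Finset (ℕ × ℕ) :=
  (Finset.range B ×ˢ Finset.range (lam 0 + 1)).filter fun p => mu p.1 ≤ p.2 ∧ p.2 < lam p.1

/-- Semistandardness: weakly increasing along rows, strictly increasing down columns. -/
def IsSSYT {M B : ℕ} {lam mu : ℕ → ℕ} (T : ↥(cellsD B lam mu) → Fin M) : Prop :=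
  (∀ c c' : ↥(cellsD B lam mu), c.val.1 = c'.val.1 → c.val.2 ≤ c'.val.2 → T c ≤ T c') ∧
  (∀ c c' : ↥(cellsD B lam mu), c.val.1 < c'.val.1 → c.val.2 = c'.val.2 → T c < T c')

open Classical in
/-- Sum over all semistandard tableaux of shape `λ/μ` with entries in `{1,…,M}` of
the product over cells `c` of `f (entry) c`. -/
noncomputable def tabSum {R : Type*} [CommRing R] (M B : ℕ) (lam mu : ℕ → ℕ)
    (f : ℕ → ℕ × ℕ → R) : R :=
  ∑ T ∈ Finset.univ.filter (fun T : ↥(cellsD B lam mu) → Fin M => IsSSYT T),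
    ∏ c : ↥(cellsD B lam mu), f ((T c : ℕ) + 1) c.val

/-- `M`-truncated Schur multiple zeta value for a general filling `s` of the diagram. -/
noncomputable def zetaTF (M B : ℕ) (lam mu : ℕ → ℕ) (s : ℕ × ℕ → ℂ) : ℂ :=
  tabSum M B lam mu fun k c => (k : ℂ) ^ (-(s c))

/-- `M`-truncated diagonally constant Schur multiple zeta value `ζ^M_{λ/μ}(a)`. -/
noncomputable def zetaT (M B : ℕ) (lam mu : ℕ → ℕ) (a : ℤ → ℂ) : ℂ :=
  zetaTF M B lam mu fun c => a ((c.2 : ℤ) - (c.1 : ℤ))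

open Classical in
/-- `ζ^M_{λ/μ}(a)` with the zero convention for non-skew shapes. -/
noncomputable def zetaZ (M B : ℕ) (lam mu : ℕ → ℤ) (a : ℤ → ℂ) : ℂ :=
  if IsSkewZ B lam mu then
    zetaT M B (fun i => (lam i).toNat) (fun i => (mu i).toNat) a else 0

open Classical in
/-- `ζ^M_{λ'/μ'}(a)` applied to conjugates, with the zero convention. -/
noncomputable def zetaZConj (M B : ℕ) (lam mu : ℕ → ℤ) (a : ℤ → ℂ) : ℂ :=
  if IsSkewZ B lam mu then
    zetaT M (lam 0).toNat (conjF (fun i => (lam i).toNat) B)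
      (conjF (fun i => (mu i).toNat) B) a
  else 0

open Classical in
/-- `M`-truncated multiple zeta-star value `ζ^{⋆,M}(s_0,…,s_{d-1})`. -/
noncomputable def zetaStarT (M d : ℕ) (s : ℕ → ℂ) : ℂ :=
  ∑ f ∈ Finset.univ.filter (fun f : Fin d → Fin M => ∀ i j : Fin d, i ≤ j → f i ≤ f j),
    ∏ i : Fin d, (((f i : ℕ) + 1 : ℕ) : ℂ) ^ (-(s i))

open Classical in
/-- `M`-truncated multiple zeta value `ζ^{M}(s_0,…,s_{d-1})`. -/
noncomputable def zetaMT (M d : ℕ) (s : ℕ → ℂ) : ℂ :=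
  ∑ f ∈ Finset.univ.filter (fun f : Fin d → Fin M => ∀ i j : Fin d, i < j → f i < f j),
    ∏ i : Fin d, (((f i : ℕ) + 1 : ℕ) : ℂ) ^ (-(s i))

/-- The Riemann zeta value `ζ(k) = Σ_{n ≥ 1} n^{-k}`. -/
noncomputable def zetaVal (k : ℕ) : ℂ := ∑' n : ℕ, ((n + 1 : ℕ) : ℂ) ^ (-(k : ℤ))

/-- `ζ^⋆(1,k) = Σ_{1 ≤ m ≤ n} m^{-1} n^{-k}`. -/
noncomputable def zetaStarOne (k : ℕ) : ℂ :=
  ∑' n : ℕ, (∑ m ∈ Finset.Icc 1 (n + 1), ((m : ℂ))⁻¹) * ((n + 1 : ℕ) : ℂ) ^ (-(k : ℤ))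

/-!
Since `L` is lower triangular, the first `r` rows of `X = L * (D * U)` only involve the leading
`r × r` block of `L`, which is again unitriangular and so has determinant `1`. Hence the minor of
`X` on rows `1, …, r` equals the corresponding minor of `D * U`, i.e. of `U` with its rows scaled
by `D₁₁, …, D_rr`.
-/

theorem Matrix.IsLowerTriangular.submatrix_castLE_mul {R n m : Type*} [NonUnitalNonAssocSemiring R]
    {N r : ℕ} {L : Matrix (Fin N) (Fin N) R} (hL : L.IsLowerTriangular) (A : Matrix (Fin N) n R)
    (hr : r ≤ N) (c : m → n) :
    (L * A).submatrix (Fin.castLE hr) c =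
      L.submatrix (Fin.castLE hr) (Fin.castLE hr) * A.submatrix (Fin.castLE hr) c := by
  ext i j
  refine (Fintype.sum_of_injective _ (Fin.castLE_injective hr) _ _ ?_ fun _ => rfl).symm
  rintro k hk
  have hik : Fin.castLE hr i < k := by
    by_contra! hki
    exact hk ⟨⟨k, lt_of_le_of_lt (Fin.le_def.mp hki) i.isLt⟩, rfl⟩
  exact mul_eq_zero_of_left (hL hik) _

theorem LowerUni.isLowerTriangular {R : Type*} [Zero R] [One R] {N : ℕ}
    {L : Matrix (Fin N) (Fin N) R} (hL : LowerUni L) : L.IsLowerTriangular :=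
  fun _ _ hij => hL.2 _ _ hij

theorem LowerUni.det_submatrix_castLE {R : Type*} [CommRing R] {N r : ℕ}
    {L : Matrix (Fin N) (Fin N) R} (hL : LowerUni L) (hr : r ≤ N) :
    (L.submatrix (Fin.castLE hr) (Fin.castLE hr)).det = 1 := by
  rw [det_of_isLowerTriangular (L.submatrix (Fin.castLE hr) (Fin.castLE hr))
    fun _ _ hij => hL.isLowerTriangular hij]
  simp [hL.1]

theorem Matrix.IsDiag.det_submatrix_mul {R l m n : Type*} [CommRing R] [Fintype l]
    [DecidableEq l] [Fintype m] {D : Matrix m m R} (hD : D.IsDiag) (U : Matrix m n R)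
    (e : l → m) (c : l → n) :
    ((D * U).submatrix e c).det = (∏ i, D (e i) (e i)) * (U.submatrix e c).det := by
  classical
  rw [← det_mul_column, ← hD.diagonal_diag]
  congr 1
  ext i j
  simp [diagonal_mul]

theorem LowerUni.det_submatrix_castLE_mul_mul {R : Type*} [CommRing R] {N r : ℕ}
    {L D : Matrix (Fin N) (Fin N) R} (hL : LowerUni L) (hD : D.IsDiag)
    (U : Matrix (Fin N) (Fin N) R) (hr : r ≤ N) (c : Fin r → Fin N) :
    ((L * D * U).submatrix (Fin.castLE hr) c).det =
      (∏ i, D (Fin.castLE hr i) (Fin.castLE hr i)) * (U.submatrix (Fin.castLE hr) c).det := by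
  rw [Matrix.mul_assoc, hL.isLowerTriangular.submatrix_castLE_mul, det_mul,
    hL.det_submatrix_castLE, one_mul, hD.det_submatrix_mul]

theorem matExt_of_lt {R : Type*} [Zero R] {N i j : ℕ} (U : Matrix (Fin N) (Fin N) R)
    (hi : i < N) (hj : j < N) : matExt U i j = U ⟨i, hi⟩ ⟨j, hj⟩ := by
  simp [matExt, hi, hj]

theorem of_matExt_eq_submatrix_castLE {R : Type*} [Zero R] {N r : ℕ}
    (U : Matrix (Fin N) (Fin N) R) (hr : r ≤ N) {c : Fin r → ℕ} (hc : ∀ j, c j < N) :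
    (of fun i j : Fin r => matExt U i (c j)) =
      U.submatrix (Fin.castLE hr) fun j => ⟨c j, hc j⟩ := by
  ext i j
  exact matExt_of_lt U (lt_of_lt_of_le i.isLt hr) (hc j)

theorem maya_lt {N r : ℕ} {lam : ℕ → ℕ} (hr : r ≤ N) (hlam : Antitone lam)
    (hwid : lam 0 ≤ N - r) (a : Fin r) : maya lam r a < N := by
  have hpart : lam (r - 1 - a) ≤ lam 0 := hlam (Nat.zero_le _)
  have ha : (a : ℕ) < r := a.isLt
  unfold maya
  omega

theorem SchurV_zero_right {R : Type*} [CommRing R] {N : ℕ} (U : Matrix (Fin N) (Fin N) R)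
    (r : ℕ) (lam : ℕ → ℕ) :
    SchurV U r lam (fun _ => 0) = (of fun i j : Fin r => matExt U i (maya lam r j)).det := by
  simp [SchurV, maya]

theorem weyl_formula_ninth_variation_general {R : Type*} [CommRing R] {N : ℕ}
    (X L D U : Matrix (Fin N) (Fin N) R)
    (hL : LowerUni L) (hD : D.IsDiag)
    (hX : X = L * D * U)
    (r : ℕ) (hr : r ≤ N) (lam : ℕ → ℕ)
    (hlam : ∀ i, lam (i + 1) ≤ lam i)
    (hwid : lam 0 ≤ N - r) :
    Matrix.det (Matrix.of fun i j : Fin r => matExt X (i : ℕ) (maya lam r j)) =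
      (∏ i ∈ Finset.range r, matExt D i i) * SchurV U r lam (fun _ => 0) := by
  have hmaya := maya_lt hr (antitone_nat_of_succ_le hlam) hwid
  have hdiag : ∏ i ∈ Finset.range r, matExt D i i = ∏ i, D (Fin.castLE hr i) (Fin.castLE hr i) :=
    (Fin.prod_univ_eq_prod_range _ r).symm.trans
      (Finset.prod_congr rfl fun i _ => matExt_of_lt D (lt_of_lt_of_le i.isLt hr) _)
  rw [SchurV_zero_right, of_matExt_eq_submatrix_castLE X hr hmaya,
    of_matExt_eq_submatrix_castLE U hr hmaya, hdiag, hX, hL.det_submatrix_castLE_mul_mul hD]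

/-- Weyl-type formula for the ninth variation via a Gauss decomposition `X = L * D * U`. -/
theorem weyl_formula_ninth_variation {R : Type*} [CommRing R] {N : ℕ} (hN : 0 < N)
    (X L D U : Matrix (Fin N) (Fin N) R)
    (hL : LowerUni L) (hD : D.IsDiag) (hU : UpperUni U)
    (hX : X = L * D * U)
    (r : ℕ) (hr : r ≤ N) (lam : ℕ → ℕ)
    (hlam : ∀ i, lam (i + 1) ≤ lam i) (hlen : ∀ i, r ≤ i → lam i = 0)
    (hwid : lam 0 ≤ N - r) :
    Matrix.det (Matrix.of fun i j : Fin r => matExt X (i : ℕ) (maya lam r j)) =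
      (∏ i ∈ Finset.range r, matExt D i i) * SchurV U r lam (fun _ => 0) :=
  weyl_formula_ninth_variation_general X L D U hL hD hX r hr lam hlam hwid
end

section
/- Desnanot–Jacobi quadratic relation, h-version (Theorem 3.2(1)): Let R be a commutative ring, N a positive integer, U an N×N upper unitriangular matrix over R, and k ≥ 1, r integers with k+1 ≤ r−1. Let λ = (λ_1 ≥ ⋯ ≥ λ_{k+1} ≥ 0) and μ = (μ_1 ≥ ⋯ ≥ μ_{k+1} ≥ 0) be partitions with μ_i ≤ λ_i for all i and λ_1 + 1 ≤ N − r. Then S^{(r)}_{(λ_1,…,λ_{k+1})/(μ_1,…,μ_{k+1})}(U) · S^{(r−1)}_{(λ_2,…,λ_k)/(μ_2,…,μ_k)}(U) = S^{(r)}_{(λ_1,…,λ_k)/(μ_1,…,μ_k)}(U) · S^{(r−1)}_{(λ_2,…,λ_{k+1})/(μ_2,…,μ_{k+1})}(U) − S^{(r)}_{(λ_2−1,…,λ_{k+1}−1)/(μ_1,…,μ_k)}(U) · S^{(r−1)}_{(λ_1+1,…,λ_k+1)/(μ_2,…,μ_{k+1})}(U), with the convention that S^{(r')}_{ν/κ}(U)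 := 0 whenever ν/κ is not a skew partition (in particular when some entry of ν is negative). -/
/-!
Because `λ` and `μ` have at most `k + 1` parts, the first `r - k - 1` entries of every Maya
diagram involved are `0, 1, …`, so each ninth-variation Schur function is the determinant of a
block unitriangular matrix. Its essential block is a minor of the single `(k+1) × (k+1)` matrix
`W = mayaMinor U (k+1) (r-k-1) λ μ`: the six factors are `W` and the minors obtained by deleting
its first and/or last row and column. The relation is then the Desnanot–Jacobi identity for `W`,
which holds for a generic matrix (multiply by the identity with its first and last columns
replaced by those of the adjugate and cancel `det W`) and hence for all matrices. The one shape
that can fail to be skew, `(λ₂-1,…,λ_{k+1}-1)/(μ₁,…,μ_k)`, then has a minor with a zero block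
too large for a nonzero determinant, in accordance with the zero convention.
-/

open Matrix BigOperators Finset Filter

theorem Equiv.Perm.eq_one_or_eq_swap_of_forall_ne {α : Type*} [DecidableEq α] {σ : Equiv.Perm α}
    {p q : α} (hpq : p ≠ q) (h : ∀ i, i ≠ p → i ≠ q → σ i = i) : σ = 1 ∨ σ = Equiv.swap p q := by
  have hext : ∀ τ : Equiv.Perm α, (∀ i, i ≠ p → i ≠ q → τ i = i) → τ p = σ p → τ q = σ q → σ = τ :=
    fun τ hτ hp hq => Equiv.ext fun i => by
      by_cases hip : i = p; · rw [hip, hp]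
      by_cases hiq : i = q; · rw [hiq, hq]
      rw [h i hip hiq, hτ i hip hiq]
  have hσp : σ p = p ∨ σ p = q := by
    by_contra! hne
    exact hne.1 (σ.injective (h _ hne.1 hne.2))
  have hσq : σ q = p ∨ σ q = q := by
    by_contra! hne
    exact hne.2 (σ.injective (h _ hne.1 hne.2))
  rcases hσp with hp | hp <;> rcases hσq with hq | hq
  · exact absurd (σ.injective (hp.trans hq.symm)) hpq
  · exact .inl (hext 1 (fun _ _ _ => rfl) hp.symm hq.symm)
  · exact .inr (hext _ (fun i => Equiv.swap_apply_of_ne_of_ne) (by simp [hp]) (by simp [hq]))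
  · exact absurd (σ.injective (hp.trans hq.symm)) hpq

namespace Matrix

variable {S : Type*} [CommRing S]

theorem det_one_updateCol_updateCol {ι : Type*} [Fintype ι] [DecidableEq ι] {p q : ι}
    (hpq : p ≠ q) (u v : ι → S) :
    (((1 : Matrix ι ι S).updateCol p u).updateCol q v).det = u p * v q - u q * v p := by
  set M := ((1 : Matrix ι ι S).updateCol p u).updateCol q v
  have hM : ∀ i j, j ≠ p → j ≠ q → M i j = if i = j then 1 else 0 := fun i j hp hq => by
    simp [M, hp, hq, one_apply]
  rw [det_apply, Fintype.sum_eq_add 1 (Equiv.swap p q)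
    (fun h => hpq (Equiv.swap_eq_one_iff.mp h.symm))]
  · rw [Fintype.prod_eq_mul p q hpq fun i hi => by simp [hM i i hi.1 hi.2],
      Fintype.prod_eq_mul p q hpq fun i hi => by
        simp [hM i i hi.1 hi.2, Equiv.swap_apply_of_ne_of_ne hi.1 hi.2]]
    simp [M, hpq, Equiv.Perm.sign_swap hpq]
    ring
  · rintro σ ⟨h1, hswap⟩
    by_contra hσ
    refine (Equiv.Perm.eq_one_or_eq_swap_of_forall_ne hpq fun i hp hq => ?_).elim h1 hswap
    by_contra hi
    exact hσ (by rw [Finset.prod_eq_zero (Finset.mem_univ i) (by rw [hM _ _ hp hq, if_neg hi]),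
      smul_zero])

theorem det_updateCol_single {n : ℕ} (A : Matrix (Fin (n + 1)) (Fin (n + 1)) S)
    (i j : Fin (n + 1)) :
    (A.updateCol j (Pi.single i 1)).det =
      (-1) ^ (j + i : ℕ) * (A.submatrix i.succAbove j.succAbove).det := by
  rw [← det_transpose, ← updateRow_transpose, ← adjugate_apply, adjugate_fin_succ_eq_det_submatrix,
    ← det_transpose]
  rfl

theorem mulVec_adjugate_col {ι : Type*} [Fintype ι] [DecidableEq ι] (A : Matrix ι ι S) (j : ι) :
    A *ᵥ (fun i => adjugate A i j) = A.det • Pi.single j 1 := by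
  ext i
  have := congrFun (congrFun (mul_adjugate A) i) j
  simp only [mul_apply, smul_apply, one_apply] at this
  simp [mulVec, dotProduct, this, Pi.single_apply, eq_comm]

theorem det_updateCol_single_zero_last {n : ℕ} (A : Matrix (Fin (n + 2)) (Fin (n + 2)) S) :
    ((A.updateCol 0 (Pi.single 0 1)).updateCol (Fin.last _) (Pi.single (Fin.last _) 1)).det =
      ((A.submatrix Fin.succ Fin.succ).submatrix Fin.castSucc Fin.castSucc).det := by
  rw [updateCol_comm _ Fin.last_pos.ne, det_updateCol_single, Fin.succAbove_zero]
  have : ((A.updateCol (Fin.last _) (Pi.single (Fin.last _) 1)).submatrix Fin.succ Fin.succ) =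
      (A.submatrix Fin.succ Fin.succ).updateCol (Fin.last _) (Pi.single (Fin.last _) 1) := by
    ext i j
    simp [updateCol_apply, Pi.single_apply, ← Fin.succ_last]
  rw [this, det_updateCol_single, Fin.succAbove_last]
  simp

theorem det_mul_desnanot_jacobi {n : ℕ} (A : Matrix (Fin (n + 2)) (Fin (n + 2)) S) :
    A.det * (A.det * ((A.submatrix Fin.succ Fin.succ).submatrix Fin.castSucc Fin.castSucc).det) =
      A.det * ((A.submatrix Fin.succ Fin.succ).det * (A.submatrix Fin.castSucc Fin.castSucc).det -
        (A.submatrix Fin.succ Fin.castSucc).det * (A.submatrix Fin.castSucc Fin.succ).det) := by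
  set L := Fin.last (n + 1)
  have hAM : A * ((1 : Matrix _ _ S).updateCol 0 (fun i => adjugate A i 0)).updateCol L
      (fun i => adjugate A i L) =
      (A.updateCol 0 (A.det • Pi.single 0 1)).updateCol L (A.det • Pi.single L 1) := by
    simp only [mul_updateCol, mul_one, mulVec_adjugate_col]
  have hdet := congrArg det hAM
  rw [det_mul, det_one_updateCol_updateCol Fin.last_pos.ne, det_updateCol_smul,
    updateCol_comm _ Fin.last_pos.ne, det_updateCol_smul, ← updateCol_comm _ Fin.last_pos.ne,
    det_updateCol_single_zero_last] at hdet
  rw [← hdet]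
  congr 1
  simp only [adjugate_fin_succ_eq_det_submatrix, Fin.succAbove_zero, Fin.succAbove_last, L,
    Fin.val_zero, Fin.val_last]
  ring_nf
  simp only [pow_mul', neg_one_sq, one_pow, mul_one]

theorem desnanot_jacobi {n : ℕ} (A : Matrix (Fin (n + 2)) (Fin (n + 2)) S) :
    A.det * ((A.submatrix Fin.succ Fin.succ).submatrix Fin.castSucc Fin.castSucc).det =
      (A.submatrix Fin.succ Fin.succ).det * (A.submatrix Fin.castSucc Fin.castSucc).det -
        (A.submatrix Fin.succ Fin.castSucc).det * (A.submatrix Fin.castSucc Fin.succ).det := by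
  let X := mvPolynomialX (Fin (n + 2)) (Fin (n + 2)) ℤ
  have hX := mul_left_cancel₀ (det_mvPolynomialX_ne_zero (Fin (n + 2)) ℤ)
    (det_mul_desnanot_jacobi X)
  have := congrArg (MvPolynomial.aeval fun p : Fin (n + 2) × Fin (n + 2) => A p.1 p.2) hX
  simp only [map_mul, map_sub, AlgHom.map_det, AlgHom.mapMatrix_apply, ← submatrix_map] at this
  simpa only [← AlgHom.mapMatrix_apply, X, mvPolynomialX_mapMatrix_aeval] using this

theorem det_eq_zero_of_zero_block {m : ℕ} (V : Matrix (Fin m) (Fin m) S) (t : Fin m)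
    (h : ∀ i j, t ≤ i → j ≤ t → V i j = 0) : V.det = 0 := by
  refine (det_apply V).trans (Finset.sum_eq_zero fun σ _ => ?_)
  obtain ⟨j, hjt, htj⟩ : ∃ j, j ≤ t ∧ t ≤ σ j := by
    by_contra! hc
    have := Finset.card_le_card_of_injOn σ
      (fun j hj => Finset.mem_Iio.mpr (hc j (Finset.mem_Iic.mp hj))) σ.injective.injOn
    rw [Fin.card_Iic, Fin.card_Iio] at this
    omega
  rw [Finset.prod_eq_zero (f := fun i => V (σ i) i) (Finset.mem_univ j) (h _ _ htj hjt), smul_zero]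

end Matrix

section Schur

variable {R : Type*} [CommRing R] {N : ℕ} {U : Matrix (Fin N) (Fin N) R}

theorem matExt_eq_zero_of_lt (hU : UpperUni U) {a b : ℕ} (h : b < a) : matExt U a b = 0 := by
  unfold matExt
  split_ifs
  · exact hU.2 _ _ h
  all_goals rfl

theorem matExt_self (hU : UpperUni U) {a : ℕ} (h : a < N) : matExt U a a = 1 := by
  rw [matExt, dif_pos h, dif_pos h, hU.1]

theorem maya_congr {f g : ℕ → ℕ} {m : ℕ} (h : ∀ i < m, f i = g i) : maya f m = maya g m := by
  funext i
  rw [maya, maya, h _ (by omega)]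

theorem maya_strictMono {lam : ℕ → ℕ} (hlam : Antitone lam) (m : ℕ) : StrictMono (maya lam m) :=
  fun i j hij => by
    have := hlam (show m - 1 - (j : ℕ) ≤ m - 1 - i by omega)
    simp only [maya]
    omega

theorem maya_castAdd {lam : ℕ → ℕ} {m : ℕ} (hlam : ∀ i, m ≤ i → lam i = 0) {p : ℕ} (a : Fin p) :
    maya lam (p + m) (Fin.castAdd m a) = a := by
  rw [maya, Fin.val_castAdd, hlam _ (by omega), zero_add]

theorem maya_natAdd (lam : ℕ → ℕ) {m p : ℕ} (b : Fin m) :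
    maya lam (p + m) (Fin.natAdd p b) = maya lam m b + p := by
  rw [maya, maya, Fin.val_natAdd, show p + m - 1 - (p + b) = m - 1 - b by omega]
  omega

theorem maya_succ (lam : ℕ → ℕ) {m : ℕ} (i : Fin m) :
    maya lam (m + 1) i.succ = maya lam m i + 1 := by
  rw [maya, maya, Fin.val_succ, show m + 1 - 1 - (i + 1) = m - 1 - i by omega]
  omega

theorem maya_castSucc (lam : ℕ → ℕ) {m : ℕ} (i : Fin m) :
    maya lam (m + 1) i.castSucc = maya (fun j => lam (j + 1)) m i := by
  rw [maya, maya, Fin.val_castSucc, show m - 1 - i + 1 = m + 1 - 1 - i by omega]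

/-- `S^{(m)}_{λ/μ}` of `U` with its first `p` rows and columns deleted: the minor of `U` on rows
`J(μ;m) + p` and columns `J(λ;m) + p`. -/
def mayaMinor (U : Matrix (Fin N) (Fin N) R) (m p : ℕ) (lam mu : ℕ → ℕ) :
    Matrix (Fin m) (Fin m) R :=
  (of (matExt U)).submatrix (fun i => maya mu m i + p) (fun j => maya lam m j + p)

theorem schurV_eq_det_submatrix (U : Matrix (Fin N) (Fin N) R) (r : ℕ) (lam mu : ℕ → ℕ) :
    SchurV U r lam mu = ((of (matExt U)).submatrix (maya mu r) (maya lam r)).det :=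
  rfl

theorem det_submatrix_matExt_val_eq_one (hU : UpperUni U) {p : ℕ} (hp : p ≤ N) :
    ((of (matExt U)).submatrix (fun a : Fin p => (a : ℕ)) (fun a : Fin p => (a : ℕ))).det = 1 := by
  have hT : ((of (matExt U)).submatrix (fun a : Fin p => (a : ℕ))
      (fun a : Fin p => (a : ℕ))).IsUpperTriangular := fun a b hab => matExt_eq_zero_of_lt hU hab
  rw [det_of_isUpperTriangular hT]
  exact Finset.prod_eq_one fun a _ => matExt_self hU (a.isLt.trans_le hp)

/-- The first `p` entries of `J(λ;p+m)` are `0, …, p-1`, which makes the minor block triangular. -/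
theorem schurV_add_eq_det_mayaMinor (hU : UpperUni U) {m p : ℕ} (hN : p + m ≤ N)
    {lam mu : ℕ → ℕ} (hlam : ∀ i, m ≤ i → lam i = 0) (hmu : ∀ i, m ≤ i → mu i = 0) :
    SchurV U (p + m) lam mu = (mayaMinor U m p lam mu).det := by
  have hblocks : (of (matExt U)).submatrix (maya mu (p + m) ∘ finSumFinEquiv)
      (maya lam (p + m) ∘ finSumFinEquiv) =
      fromBlocks ((of (matExt U)).submatrix (fun a : Fin p => (a : ℕ)) (fun a : Fin p => (a : ℕ)))
        ((of (matExt U)).submatrix (fun a : Fin p => (a : ℕ)) (fun j => maya lam m j + p)) 0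
        (mayaMinor U m p lam mu) := by
    ext (a | a) (b | b) <;>
      simp only [submatrix_apply, Function.comp_apply, finSumFinEquiv_apply_left,
        finSumFinEquiv_apply_right, maya_castAdd hlam, maya_castAdd hmu, maya_natAdd,
        fromBlocks_apply₁₁, fromBlocks_apply₁₂, fromBlocks_apply₂₁, fromBlocks_apply₂₂, mayaMinor]
    exact matExt_eq_zero_of_lt hU (by omega)
  rw [schurV_eq_det_submatrix, ← det_submatrix_equiv_self finSumFinEquiv, submatrix_submatrix,
    hblocks, det_fromBlocks_zero₂₁, det_submatrix_matExt_val_eq_one hU (by omega), one_mul]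

theorem mayaMinor_congr {m p : ℕ} {lam lam' mu mu' : ℕ → ℕ} (hlam : ∀ i < m, lam i = lam' i)
    (hmu : ∀ i < m, mu i = mu' i) : mayaMinor U m p lam mu = mayaMinor U m p lam' mu' := by
  rw [mayaMinor, mayaMinor, maya_congr hlam, maya_congr hmu]

theorem mayaMinor_submatrix_succ_succ (U : Matrix (Fin N) (Fin N) R) (m p : ℕ) (lam mu : ℕ → ℕ) :
    (mayaMinor U (m + 1) p lam mu).submatrix Fin.succ Fin.succ = mayaMinor U m (p + 1) lam mu := by
  ext i j
  simp only [mayaMinor, submatrix_apply, maya_succ, add_assoc, add_comm 1 p]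

theorem mayaMinor_submatrix_castSucc_castSucc (U : Matrix (Fin N) (Fin N) R) (m p : ℕ)
    (lam mu : ℕ → ℕ) :
    (mayaMinor U (m + 1) p lam mu).submatrix Fin.castSucc Fin.castSucc =
      mayaMinor U m p (fun i => lam (i + 1)) (fun i => mu (i + 1)) := by
  ext i j
  simp only [mayaMinor, submatrix_apply, maya_castSucc]

theorem mayaMinor_submatrix_castSucc_succ (U : Matrix (Fin N) (Fin N) R) (m p : ℕ)
    (lam mu : ℕ → ℕ) :
    (mayaMinor U (m + 1) p lam mu).submatrix Fin.castSucc Fin.succ =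
      mayaMinor U m p (fun i => lam i + 1) (fun i => mu (i + 1)) := by
  ext i j
  simp only [mayaMinor, submatrix_apply, of_apply, maya_castSucc, maya_succ]
  congr 1
  simp only [maya]
  omega

theorem mayaMinor_submatrix_succ_castSucc (U : Matrix (Fin N) (Fin N) R) {m : ℕ} (p : ℕ)
    {lam : ℕ → ℕ} (mu : ℕ → ℕ) (hlam : ∀ i < m, 0 < lam (i + 1)) :
    (mayaMinor U (m + 1) p lam mu).submatrix Fin.succ Fin.castSucc =
      mayaMinor U m (p + 1) (fun i => lam (i + 1) - 1) mu := by
  ext i j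
  have := hlam (m - 1 - j) (by omega)
  simp only [mayaMinor, submatrix_apply, of_apply, maya_castSucc, maya_succ]
  simp only [maya]
  congr 1 <;> omega

theorem schurVz_ite_natCast_eq_det (hU : UpperUni U) {m p r B : ℕ} {f g : ℕ → ℕ}
    (hf : ∀ i, i + 1 < m → f (i + 1) ≤ f i) (hg : ∀ i, i + 1 < m → g (i + 1) ≤ g i)
    (hgf : ∀ i < m, g i ≤ f i) (hmB : m ≤ B) (hr : p + m = r) (hN : r ≤ N) :
    SchurVz U r B (fun i => if i < m then (f i : ℤ) else 0)
      (fun i => if i < m then (g i : ℤ) else 0) = (mayaMinor U m p f g).det := by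
  have hskew : IsSkewZ B (fun i => if i < m then (f i : ℤ) else 0)
      (fun i => if i < m then (g i : ℤ) else 0) := by
    refine ⟨⟨fun i => ?_, fun i => ?_, fun i hi => ?_⟩,
      ⟨fun i => ?_, fun i => ?_, fun i hi => ?_⟩, fun i => ?_⟩ <;>
    · have := hf i
      have := hg i
      have := hgf i
      dsimp only
      split_ifs <;> omega
  subst hr
  rw [SchurVz, if_pos hskew, schurV_add_eq_det_mayaMinor hU hN (fun i hi => by simp; omega)
    (fun i hi => by simp; omega),
    mayaMinor_congr (lam' := f) (mu' := g) (fun i hi => by simp [hi]) (fun i hi => by simp [hi])]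

theorem det_submatrix_matExt_eq_zero (hU : UpperUni U) {m : ℕ} {x y : Fin m → ℕ}
    (hx : Monotone x) (hy : Monotone y) {t : Fin m} (h : y t < x t) :
    ((of (matExt U)).submatrix x y).det = 0 :=
  det_eq_zero_of_zero_block _ t fun _ _ hi hj =>
    matExt_eq_zero_of_lt hU ((hy hj).trans_lt (h.trans_le (hx hi)))

/-- The factor `S^{(r)}_{(λ₂-1,…,λ_{n+2}-1)/(μ₁,…,μ_{n+1})}`. When its shape is not skew, the
minor on the right has a zero block too large for a nonzero determinant. -/
theorem schurVz_pred_eq_det_submatrix (hU : UpperUni U) {lam mu : ℕ → ℕ} (hlam : Antitone lam)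
    (hmu : Antitone mu) {n r : ℕ} (hr : n + 3 ≤ r) (hN : r ≤ N) :
    SchurVz U r (n + 1 + 1) (fun i => if i < n + 1 then (lam (i + 1) : ℤ) - 1 else 0)
        (fun i => if i < n + 1 then (mu i : ℤ) else 0) =
      ((mayaMinor U (n + 2) (r - (n + 2)) lam mu).submatrix Fin.succ Fin.castSucc).det := by
  by_cases hskew : ∀ i ≤ n, mu i < lam (i + 1)
  · have hcast : (fun i => if i < n + 1 then (lam (i + 1) : ℤ) - 1 else 0) =
        fun i => if i < n + 1 then ((lam (i + 1) - 1 : ℕ) : ℤ) else 0 := by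
      funext i
      split_ifs with hi
      · have := hskew i (by omega)
        omega
      · rfl
    rw [hcast, schurVz_ite_natCast_eq_det hU (p := r - (n + 2) + 1)
      (fun i _ => Nat.sub_le_sub_right (hlam (Nat.le_succ _)) 1) (fun i _ => hmu (Nat.le_succ i))
      (fun i hi => Nat.le_sub_one_of_lt (hskew i (by omega))) (by omega) (by omega) hN,
      mayaMinor_submatrix_succ_castSucc _ _ _ fun i hi =>
        (Nat.zero_le _).trans_lt (hskew i (by omega))]
  · push Not at hskew
    obtain ⟨i₀, hi₀, hle⟩ := hskew
    have hnot : ¬ IsSkewZ (n + 1 + 1) (fun i => if i < n + 1 then (lam (i + 1) : ℤ) - 1 else 0)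
        (fun i => if i < n + 1 then (mu i : ℤ) else 0) := fun h => by
      have := h.2.2 i₀
      simp only [if_pos (show i₀ < n + 1 by omega)] at this
      omega
    rw [SchurVz, if_neg hnot, mayaMinor, submatrix_submatrix,
      det_submatrix_matExt_eq_zero hU (t := ⟨n - i₀, by omega⟩)
        (((maya_strictMono hmu _).monotone.add_const _).comp Fin.strictMono_succ.monotone)
        (((maya_strictMono hlam _).monotone.add_const _).comp Fin.strictMono_castSucc.monotone)]
    simp only [Function.comp_apply, Fin.val_succ, Fin.val_castSucc, maya]
    rw [show n + 1 + 1 - 1 - (n - i₀) = i₀ + 1 by omega,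
      show n + 1 + 1 - 1 - (n - i₀ + 1) = i₀ by omega]
    omega

end Schur

theorem desnanot_jacobi_h_general {R : Type*} [CommRing R] {N : ℕ}
    (U : Matrix (Fin N) (Fin N) R) (hU : UpperUni U)
    (k r : ℕ) (hk : 1 ≤ k) (hr : k + 1 ≤ r - 1) (hrN : r ≤ N)
    (lam mu : ℕ → ℕ)
    (hlam : ∀ i, lam (i + 1) ≤ lam i) (hmu : ∀ i, mu (i + 1) ≤ mu i)
    (hsub : ∀ i, mu i ≤ lam i) :
    SchurVz U r (k + 1) (fun i => if i < k + 1 then (lam i : ℤ) else 0)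
        (fun i => if i < k + 1 then (mu i : ℤ) else 0) *
      SchurVz U (r - 1) (k + 1) (fun i => if i < k - 1 then (lam (i + 1) : ℤ) else 0)
        (fun i => if i < k - 1 then (mu (i + 1) : ℤ) else 0) =
    SchurVz U r (k + 1) (fun i => if i < k then (lam i : ℤ) else 0)
        (fun i => if i < k then (mu i : ℤ) else 0) *
      SchurVz U (r - 1) (k + 1) (fun i => if i < k then (lam (i + 1) : ℤ) else 0)
        (fun i => if i < k then (mu (i + 1) : ℤ) else 0) -
    SchurVz U r (k + 1) (fun i => if i < k then (lam (i + 1) : ℤ) - 1 else 0)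
        (fun i => if i < k then (mu i : ℤ) else 0) *
      SchurVz U (r - 1) (k + 1) (fun i => if i < k then (lam i : ℤ) + 1 else 0)
        (fun i => if i < k then (mu (i + 1) : ℤ) else 0) := by
  obtain ⟨n, rfl⟩ : ∃ n, k = n + 1 := ⟨k - 1, by omega⟩
  set p := r - (n + 2)
  -- `← Nat.cast_add_one` turns `(lam i : ℤ) + 1` into a cast, as `schurVz_ite_natCast_eq_det` wants
  simp only [Nat.add_sub_cancel, ← Nat.cast_add_one]
  rw [schurVz_ite_natCast_eq_det hU (m := n + 2) (p := p) (fun i _ => hlam i) (fun i _ => hmu i)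
      (fun i _ => hsub i) le_rfl (by omega) hrN,
    schurVz_ite_natCast_eq_det hU (m := n) (p := p + 1) (fun i _ => hlam (i + 1))
      (fun i _ => hmu (i + 1)) (fun i _ => hsub (i + 1)) (by omega) (by omega) (by omega),
    schurVz_ite_natCast_eq_det hU (m := n + 1) (p := p + 1) (fun i _ => hlam i) (fun i _ => hmu i)
      (fun i _ => hsub i) (by omega) (by omega) hrN,
    schurVz_ite_natCast_eq_det hU (m := n + 1) (p := p) (fun i _ => hlam (i + 1))
      (fun i _ => hmu (i + 1)) (fun i _ => hsub (i + 1)) (by omega) (by omega) (by omega),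
    schurVz_ite_natCast_eq_det hU (m := n + 1) (p := p) (f := fun i => lam i + 1)
      (fun i _ => Nat.succ_le_succ (hlam i)) (fun i _ => hmu (i + 1))
      (fun i _ => (hsub (i + 1)).trans ((hlam i).trans (Nat.le_succ _))) (by omega) (by omega)
      (by omega),
    schurVz_pred_eq_det_submatrix hU (antitone_nat_of_succ_le hlam) (antitone_nat_of_succ_le hmu)
      (by omega) hrN,
    ← mayaMinor_submatrix_castSucc_castSucc U n (p + 1),
    ← mayaMinor_submatrix_succ_succ U (n + 1) p,
    ← mayaMinor_submatrix_castSucc_castSucc U (n + 1) p, ← mayaMinor_submatrix_castSucc_succ]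
  exact Matrix.desnanot_jacobi _

/-- Desnanot–Jacobi quadratic relation for the ninth variation, `h`-version. -/
theorem desnanot_jacobi_h {R : Type*} [CommRing R] {N : ℕ} (hN : 0 < N)
    (U : Matrix (Fin N) (Fin N) R) (hU : UpperUni U)
    (k r : ℕ) (hk : 1 ≤ k) (hr : k + 1 ≤ r - 1) (hrN : r ≤ N)
    (lam mu : ℕ → ℕ)
    (hlam : ∀ i, lam (i + 1) ≤ lam i) (hmu : ∀ i, mu (i + 1) ≤ mu i)
    (hsub : ∀ i, mu i ≤ lam i)
    (hlen : ∀ i, k + 1 ≤ i → lam i = 0)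
    (hwid : lam 0 + 1 ≤ N - r) :
    SchurVz U r (k + 1) (fun i => if i < k + 1 then (lam i : ℤ) else 0)
        (fun i => if i < k + 1 then (mu i : ℤ) else 0) *
      SchurVz U (r - 1) (k + 1) (fun i => if i < k - 1 then (lam (i + 1) : ℤ) else 0)
        (fun i => if i < k - 1 then (mu (i + 1) : ℤ) else 0) =
    SchurVz U r (k + 1) (fun i => if i < k then (lam i : ℤ) else 0)
        (fun i => if i < k then (mu i : ℤ) else 0) *
      SchurVz U (r - 1) (k + 1) (fun i => if i < k then (lam (i + 1) : ℤ) else 0)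
        (fun i => if i < k then (mu (i + 1) : ℤ) else 0) -
    SchurVz U r (k + 1) (fun i => if i < k then (lam (i + 1) : ℤ) - 1 else 0)
        (fun i => if i < k then (mu i : ℤ) else 0) *
      SchurVz U (r - 1) (k + 1) (fun i => if i < k then (lam i : ℤ) + 1 else 0)
        (fun i => if i < k then (mu (i + 1) : ℤ) else 0) :=
  desnanot_jacobi_h_general U hU k r hk hr hrN lam mu hlam hmu hsub
end

section
/- Rectangle relation (Corollary 3.4): Let R be a commutative ring, N a positive integer, U an N×N upper unitriangular matrix over R, and p, q ≥ 1, r integers with p+1 ≤ r−1 and q+1 ≤ N−r. Denote by [m|n] the rectangular partition (n^m). Then S^{(r)}_{[p+1|q]}(U) · S^{(r−1)}_{[p−1|q]}(U) = S^{(r)}_{[p|q]}(U) · S^{(r−1)}_{[p|q]}(U) − S^{(r)}_{[p|q−1]}(U) · S^{(r−1)}_{[p|q+1]}(U). -/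
open Matrix BigOperators Finset Filter

/-!
The relation is a three-term Plücker relation among minors of the first `r` rows of `U`. Put
`A = [u_j, j ∈ J([p+1|q]; r) | e_r]` (an `r × (r+1)` matrix; `u_j` is column `j` of `U` and `e_r`
the `r`-th unit vector) and `B = [u_j, j ∈ J([p-1|q]; r-1) | ∗]`. The exchange identity
`∑ⱼ (-1)ʲ det (A without column j) · det (B with its last column replaced by A_j) = 0`
(Cramer's rule applied to the kernel vector of `A` given by its maximal minors) has only three
nonzero terms, since every other column of `A` is already a column of `B`. Bordering by `e_r`
turns an `(r-1)`-minor into an `r`-minor, so the six surviving determinants are exactly the six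
Schur functions; only one of them needs its columns re-sorted, at the cost of a sign.
-/

namespace Matrix

variable {R : Type*} [CommRing R] {n : ℕ}

theorem mulVec_alternating_minors_eq_zero (A : Matrix (Fin n) (Fin (n + 1)) R) :
    A *ᵥ (fun j => (-1) ^ (j : ℕ) * (A.submatrix id j.succAbove).det) = 0 := by
  ext i
  have h := det_succ_row_zero (of (Fin.cons (A i) A))
  rw [det_zero_of_row_eq (Fin.succ_ne_zero i).symm (by ext; rfl)] at h
  rw [Pi.zero_apply, h, mulVec, dotProduct]
  refine Finset.sum_congr rfl fun j _ => ?_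
  rw [← mul_assoc, mul_comm (A i j)]
  rfl

theorem sum_alternating_minors_mul_det_updateCol_eq_zero (A : Matrix (Fin n) (Fin (n + 1)) R)
    (B : Matrix (Fin n) (Fin n) R) (k : Fin n) :
    ∑ j : Fin (n + 1), (-1) ^ (j : ℕ) * (A.submatrix id j.succAbove).det *
      (B.updateCol k fun i => A i j).det = 0 := by
  set c : Fin (n + 1) → R := fun j => (-1) ^ (j : ℕ) * (A.submatrix id j.succAbove).det
  calc _ = cramer B (∑ j, c j • fun i => A i j) k := by
        rw [map_sum, Finset.sum_apply]
        exact Finset.sum_congr rfl fun j _ => by rw [map_smul, Pi.smul_apply, cramer_apply]; rfl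
    _ = 0 := by
        have hcol : (∑ j, c j • fun i => A i j) = A *ᵥ c := by
          ext i; simp [mulVec, dotProduct, mul_comm]
        rw [hcol, mulVec_alternating_minors_eq_zero, map_zero, Pi.zero_apply]

theorem det_eq_neg_one_pow_mul_det_of_moveCol (M M' : Matrix (Fin (n + 1)) (Fin (n + 1)) R)
    (j j' : Fin (n + 1)) (hj : ∀ i, M i j = M' i j')
    (hsucc : ∀ i c, M i (j.succAbove c) = M' i (j'.succAbove c)) :
    M.det = (-1) ^ ((j : ℕ) + j') * M'.det := by
  have hsub : ∀ i : Fin (n + 1),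
      M.submatrix i.succAbove j.succAbove = M'.submatrix i.succAbove j'.succAbove :=
    fun i => by ext a c; exact hsucc _ _
  rw [det_succ_column M j, det_succ_column M' j', Finset.mul_sum]
  refine Finset.sum_congr rfl fun i _ => ?_
  rw [hj, hsub]
  have hsign : (-1 : R) ^ ((j : ℕ) + j') * (-1) ^ ((i : ℕ) + j') = (-1) ^ ((i : ℕ) + j) := by
    rw [← pow_add, neg_one_pow_eq_pow_mod_two, Nat.add_comm (i : ℕ),
      show (j : ℕ) + j' + (j' + i) = (i + j) + 2 * j' by ring, Nat.add_mul_mod_self_left,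
      ← neg_one_pow_eq_pow_mod_two]
  rw [← hsign]; ring

theorem det_eq_det_submatrix_castSucc_of_col_last (M : Matrix (Fin (n + 1)) (Fin (n + 1)) R)
    (h : ∀ i, M i (Fin.last n) = if i = Fin.last n then 1 else 0) :
    M.det = (M.submatrix Fin.castSucc Fin.castSucc).det := by
  rw [det_succ_column M (Fin.last n), Fin.sum_univ_castSucc, Finset.sum_eq_zero, zero_add,
    h, if_pos rfl, Fin.succAbove_last, ← two_mul, pow_mul, neg_one_sq, one_pow, one_mul,
    one_mul]
  intro i _
  rw [h, if_neg (Fin.castSucc_ne_last i), mul_zero, zero_mul]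

end Matrix

theorem Fin.val_succAbove_eq_ite {n : ℕ} (p : Fin (n + 1)) (i : Fin n) :
    (p.succAbove i : ℕ) = if (i : ℕ) < p then (i : ℕ) else (i : ℕ) + 1 := by
  rcases lt_or_ge (i : ℕ) p with h | h
  · rw [Fin.succAbove_of_castSucc_lt _ _ h, if_pos h, Fin.val_castSucc]
  · rw [Fin.succAbove_of_le_castSucc _ _ h, if_neg (not_lt.2 h), Fin.val_succ]

section RectangleRelation

variable {R : Type*} [CommRing R] {N : ℕ} (U : Matrix (Fin N) (Fin N) R)

/-- The `j`-th element (`0`-based) of the Maya diagram `J([p|q]; m)`, minus one. -/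
def rectCol (m p q j : ℕ) : ℕ := if j + p < m then j else j + q

theorem det_eq_schurV_rectP {m p q : ℕ} (M : Matrix (Fin m) (Fin m) R)
    (hM : ∀ i j, M i j = matExt U i (rectCol m p q j)) :
    M.det = SchurV U m (rectP p q) (fun _ => 0) := by
  rw [SchurV]
  congr 1
  ext i j
  simp only [hM, of_apply, maya, rectP, rectCol, zero_add]
  split_ifs <;> first | rfl | (congr 1; omega)

theorem det_eq_schurV_rectP_of_col_last {m p q : ℕ} (M : Matrix (Fin (m + 1)) (Fin (m + 1)) R)
    (hlast : ∀ i, M i (Fin.last m) = if i = Fin.last m then 1 else 0)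
    (hM : ∀ i j : Fin m, M i.castSucc j.castSucc = matExt U i (rectCol m p q j)) :
    M.det = SchurV U m (rectP p q) (fun _ => 0) := by
  rw [det_eq_det_submatrix_castSucc_of_col_last M hlast]
  exact det_eq_schurV_rectP U _ hM

/-- The matrix `A` for `r = m + 1`: `[u_j, j ∈ J([p+1|q]; m+1) | e]`, `e` the last unit vector. -/
def rectRelLeft (m p q : ℕ) : Matrix (Fin (m + 1)) (Fin (m + 2)) R :=
  of fun i j => if (j : ℕ) ≤ m then matExt U i (rectCol (m + 1) (p + 1) q j)
    else if (i : ℕ) = m then 1 else 0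

/-- The matrix `B` for `r = m + 1`: `[u_j, j ∈ J([p-1|q]; m) | ∗]`, last column replaced. -/
def rectRelRight (m p q : ℕ) : Matrix (Fin (m + 1)) (Fin (m + 1)) R :=
  of fun i j => matExt U i (rectCol m (p - 1) q j)

variable {m p q : ℕ}

theorem det_rectRelRight_updateCol_eq_zero (j : Fin m) (hj : (j : ℕ) ≠ m - p) :
    ((rectRelRight U m p q).updateCol (Fin.last m)
      fun i => rectRelLeft U m p q i j.castSucc.castSucc).det = 0 := by
  refine det_zero_of_column_eq (Fin.castSucc_ne_last j) fun i => ?_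
  simp only [updateCol_self, updateCol_ne (Fin.castSucc_ne_last j), rectRelLeft, rectRelRight,
    of_apply, Fin.val_castSucc, rectCol]
  split_ifs <;> first | rfl | omega

theorem det_rectRelLeft_submatrix_succAbove_last :
    ((rectRelLeft U m p q).submatrix id (Fin.last (m + 1)).succAbove).det =
      SchurV U (m + 1) (rectP (p + 1) q) (fun _ => 0) := by
  refine det_eq_schurV_rectP U _ fun i j => ?_
  simp only [submatrix_apply, id, Fin.succAbove_last, rectRelLeft, of_apply, Fin.val_castSucc]
  rw [if_pos (by omega)]

theorem det_rectRelLeft_submatrix_succAbove_castSucc_last :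
    ((rectRelLeft U m p q).submatrix id (Fin.last m).castSucc.succAbove).det =
      SchurV U m (rectP p q) (fun _ => 0) := by
  refine det_eq_schurV_rectP_of_col_last U _ (fun i => ?_) fun i j => ?_
  all_goals
    simp only [submatrix_apply, id, rectRelLeft, of_apply, Fin.val_succAbove_eq_ite,
      Fin.val_castSucc, Fin.val_last, Fin.ext_iff, rectCol]
    split_ifs <;> first | rfl | omega

theorem det_rectRelLeft_submatrix_succAbove_sub :
    ((rectRelLeft U m p q).submatrix id (⟨m - p, by omega⟩ : Fin (m + 2)).succAbove).det =
      SchurV U m (rectP p (q + 1)) (fun _ => 0) := by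
  refine det_eq_schurV_rectP_of_col_last U _ (fun i => ?_) fun i j => ?_
  all_goals
    simp only [submatrix_apply, id, rectRelLeft, of_apply, Fin.val_succAbove_eq_ite,
      Fin.val_castSucc, Fin.val_last, Fin.ext_iff, rectCol]
    split_ifs <;> first | rfl | omega | (congr 1; omega)

theorem det_rectRelRight_updateCol_last :
    ((rectRelRight U m p q).updateCol (Fin.last m)
      fun i => rectRelLeft U m p q i (Fin.last (m + 1))).det =
      SchurV U m (rectP (p - 1) q) (fun _ => 0) := by
  refine det_eq_schurV_rectP_of_col_last U _ (fun i => ?_) fun i j => ?_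
  all_goals
    simp only [updateCol_apply, rectRelLeft, rectRelRight, of_apply, Fin.val_castSucc,
      Fin.val_last, Fin.ext_iff]
    split_ifs <;> first | rfl | omega

theorem det_rectRelRight_updateCol_castSucc_last (hp : 1 ≤ p) :
    ((rectRelRight U m p q).updateCol (Fin.last m)
      fun i => rectRelLeft U m p q i (Fin.last m).castSucc).det =
      SchurV U (m + 1) (rectP p q) (fun _ => 0) := by
  refine det_eq_schurV_rectP U _ fun i j => ?_
  simp only [updateCol_apply, rectRelLeft, rectRelRight, of_apply, Fin.val_castSucc,
    Fin.val_last, Fin.ext_iff, rectCol]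
  split_ifs <;> first | rfl | omega | (congr 1; omega)

theorem det_rectRelRight_updateCol_sub (hp : 1 ≤ p) (hq : 1 ≤ q) (hpm : p ≤ m) :
    ((rectRelRight U m p q).updateCol (Fin.last m)
      fun i => rectRelLeft U m p q i ⟨m - p, by omega⟩).det =
      (-1) ^ (p + 1) * SchurV U (m + 1) (rectP p (q - 1)) (fun _ => 0) := by
  rw [show (-1 : R) ^ (p + 1) = (-1) ^ (m + (m + 1 - p)) by
    rw [show m + (m + 1 - p) = p + 1 + 2 * (m - p) by omega, pow_add _ (p + 1), pow_mul,
      neg_one_sq, one_pow, mul_one]]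
  rw [← det_eq_schurV_rectP U (of fun i j => matExt U i (rectCol (m + 1) p (q - 1) j))
    fun _ _ => rfl]
  refine det_eq_neg_one_pow_mul_det_of_moveCol _ _ (Fin.last m) ⟨m + 1 - p, by omega⟩
    (fun i => ?_) fun i j => ?_
  all_goals
    simp only [updateCol_apply, rectRelLeft, rectRelRight, of_apply, Fin.val_succAbove_eq_ite,
      Fin.succAbove_last, Fin.castSucc_ne_last, if_true, if_false, Fin.val_castSucc, Fin.val_last,
      rectCol]
    split_ifs <;> first | rfl | omega | (congr 1; omega)

end RectangleRelation

theorem rectangle_relation_general {R : Type*} [CommRing R] {N : ℕ}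
    (U : Matrix (Fin N) (Fin N) R)
    (p q r : ℕ) (hp : 1 ≤ p) (hq : 1 ≤ q)
    (hr : p + 1 ≤ r - 1) :
    SchurV U r (rectP (p + 1) q) (fun _ => 0) *
        SchurV U (r - 1) (rectP (p - 1) q) (fun _ => 0) =
      SchurV U r (rectP p q) (fun _ => 0) * SchurV U (r - 1) (rectP p q) (fun _ => 0) -
        SchurV U r (rectP p (q - 1)) (fun _ => 0) *
          SchurV U (r - 1) (rectP p (q + 1)) (fun _ => 0) := by
  obtain ⟨m, rfl⟩ : ∃ m, r = m + 1 := ⟨r - 1, by omega⟩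
  rw [Nat.add_sub_cancel] at hr ⊢
  have hexchange := sum_alternating_minors_mul_det_updateCol_eq_zero
    (rectRelLeft U m p q) (rectRelRight U m p q) (Fin.last m)
  rw [Fin.sum_univ_castSucc, Fin.sum_univ_castSucc,
    Finset.sum_eq_single ⟨m - p, by omega⟩
      (fun j _ hj => by
        rw [det_rectRelRight_updateCol_eq_zero U j fun h => hj (Fin.ext h), mul_zero])
      (by simp)] at hexchange
  simp only [Fin.castSucc_mk] at hexchange
  rw [det_rectRelLeft_submatrix_succAbove_sub, det_rectRelRight_updateCol_sub U hp hq (by omega),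
    det_rectRelLeft_submatrix_succAbove_castSucc_last,
    det_rectRelRight_updateCol_castSucc_last U hp, det_rectRelLeft_submatrix_succAbove_last,
    det_rectRelRight_updateCol_last, Fin.val_castSucc, Fin.val_last, Fin.val_last] at hexchange
  have hsign : (-1 : R) ^ (m - p) * (-1) ^ (p + 1) = -(-1) ^ m := by
    rw [← pow_add, show m - p + (p + 1) = m + 1 by omega, pow_succ, mul_neg_one]
  refine (isUnit_neg_one.pow m).mul_left_cancel ?_
  linear_combination -hexchange + SchurV U (m + 1) (rectP p (q - 1)) (fun _ => 0) *
    SchurV U m (rectP p (q + 1)) (fun _ => 0) * hsign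

/-- Rectangle relation for the ninth variation. -/
theorem rectangle_relation {R : Type*} [CommRing R] {N : ℕ} (hN : 0 < N)
    (U : Matrix (Fin N) (Fin N) R) (hU : UpperUni U)
    (p q r : ℕ) (hp : 1 ≤ p) (hq : 1 ≤ q)
    (hr : p + 1 ≤ r - 1) (hrN : r ≤ N) (hwid : q + 1 ≤ N - r) :
    SchurV U r (rectP (p + 1) q) (fun _ => 0) *
        SchurV U (r - 1) (rectP (p - 1) q) (fun _ => 0) =
      SchurV U r (rectP p q) (fun _ => 0) * SchurV U (r - 1) (rectP p q) (fun _ => 0) -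
        SchurV U r (rectP p (q - 1)) (fun _ => 0) *
          SchurV U (r - 1) (rectP p (q + 1)) (fun _ => 0) :=
  rectangle_relation_general U p q r hp hq hr
end
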